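/- Let ω be a Thiele function with Δω(i) > 0 for all integers i ≥ 0, let G = (N, A) be a graph, and let κ ≥ 0 and t be integers with 1 ≤ t ≤ |A|. Construct: candidates C = {p} ∪ {c(e) : e ∈ A} with p fresh; for each vertex u ∈ N, the vote v(u) = {c(e) : e ∈ A incident to u}; committee size k = t; and a tie-breaking linear order ⊳ on C in which p is first. Then there exists S ⊆ N with |S| ≤ κ covering at least t edges of G if and only if there exists S ⊆ N with |S| ≤ κ such that p is not contained in the seqω winning t-committee of (C, {v(u) : u ∈ S}) with respect to ⊳. -/

import Mathlib

open Finset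

attribute [local instance] Classical.propDecidable

universe u

variable {α : Type u}

/-- The Thiele ω-score of a committee `w` in the election with votes `V`. -/
noncomputable def thieleScore [DecidableEq α] (ω : ℕ → ℝ) (V : Multiset (Finset α))
    (w : Finset α) : ℝ :=
  (V.map fun v => ω (v ∩ w).card).sum

/-- The ω margin contribution of candidate `c` to committee `w`. -/
noncomputable def marginContrib [DecidableEq α] (ω : ℕ → ℝ) (V : Multiset (Finset α))
    (w : Finset α) (c : α) : ℝ :=
  thieleScore ω V (insert c w) - thieleScore ω V w

/-- Candidates of `C \ w` whose ω margin contribution to `w` is maximum. -/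
noncomputable def maxMarginSet [DecidableEq α] (ω : ℕ → ℝ) (V : Multiset (Finset α))
    (C w : Finset α) : Finset α :=
  (C \ w).filter fun c => ∀ c' ∈ C \ w, marginContrib ω V w c' ≤ marginContrib ω V w c

/-- Among the maximizers, the candidate(s) earliest in the tie-breaking order `pri`
(the order with `a ⊳ b` iff `pri a < pri b`). -/
noncomputable def seqNext [DecidableEq α] (ω : ℕ → ℝ) (pri : α → ℕ) (V : Multiset (Finset α))
    (C w : Finset α) : Finset α :=
  (maxMarginSet ω V C w).filter fun c => ∀ c' ∈ maxMarginSet ω V C w, pri c ≤ pri c'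

/-- The winning `k`-committee of the sequential ω-Thiele rule with tie-breaking order `pri`:
starting from `∅`, repeatedly add the candidate with maximum ω margin contribution,
breaking ties in favor of the candidate earliest in the order. -/
noncomputable def seqCommittee [DecidableEq α] (ω : ℕ → ℝ) (pri : α → ℕ)
    (V : Multiset (Finset α)) (C : Finset α) : ℕ → Finset α
  | 0 => ∅
  | k + 1 => seqCommittee ω pri V C k ∪ seqNext ω pri V C (seqCommittee ω pri V C k)

/-- The AV score of a committee. -/
noncomputable def avScore [DecidableEq α] (V : Multiset (Finset α)) (w : Finset α) : ℕ :=
  (V.map fun v => (v ∩ w).card).sum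

/-- AV winning `k`-committees: the `k`-subsets of `C` of maximum AV score. -/
noncomputable def avWinners [DecidableEq α] (C : Finset α) (V : Multiset (Finset α)) (k : ℕ) :
    Finset (Finset α) :=
  (C.powersetCard k).filter fun w => ∀ w' ∈ C.powersetCard k, avScore V w' ≤ avScore V w

/-- The SAV score of a committee. -/
noncomputable def savScore [DecidableEq α] (V : Multiset (Finset α)) (w : Finset α) : ℝ :=
  (V.map fun v => ((w ∩ v).card : ℝ) / (v.card : ℝ)).sum

/-- SAV winning `k`-committees: the `k`-subsets of `C` of maximum SAV score. -/
noncomputable def savWinners [DecidableEq α] (C : Finset α) (V : Multiset (Finset α)) (k : ℕ) :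
    Finset (Finset α) :=
  (C.powersetCard k).filter fun w => ∀ w' ∈ C.powersetCard k, savScore V w' ≤ savScore V w

/-- The NSAV score of a committee (with respect to candidate set `C`). -/
noncomputable def nsavScore [DecidableEq α] (C : Finset α) (V : Multiset (Finset α))
    (w : Finset α) : ℝ :=
  (V.map fun v => ((w ∩ v).card : ℝ) / (v.card : ℝ)).sum
    - (V.map fun v => ((w \ v).card : ℝ) / ((C \ v).card : ℝ)).sum

/-- The PAV score of a committee. -/
noncomputable def pavScore [DecidableEq α] (V : Multiset (Finset α)) (w : Finset α) : ℝ :=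
  (V.map fun v => ∑ i ∈ Finset.range (v ∩ w).card, (1 : ℝ) / (i + 1)).sum

/-- PAV winning `k`-committees: the `k`-subsets of `C` of maximum PAV score. -/
noncomputable def pavWinners [DecidableEq α] (C : Finset α) (V : Multiset (Finset α)) (k : ℕ) :
    Finset (Finset α) :=
  (C.powersetCard k).filter fun w => ∀ w' ∈ C.powersetCard k, pavScore V w' ≤ pavScore V w

/-- The ABCCV score of a committee: the number of votes approving at least one member. -/
noncomputable def abccvScore [DecidableEq α] (V : Multiset (Finset α)) (w : Finset α) : ℕ :=
  Multiset.card (V.filter fun v => (v ∩ w).Nonempty)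

/-- ABCCV winning `k`-committees: the `k`-subsets of `C` of maximum ABCCV score. -/
noncomputable def abccvWinners [DecidableEq α] (C : Finset α) (V : Multiset (Finset α)) (k : ℕ) :
    Finset (Finset α) :=
  (C.powersetCard k).filter fun w => ∀ w' ∈ C.powersetCard k, abccvScore V w' ≤ abccvScore V w

/-- The MAV score of a committee: the maximum Hamming distance to a vote. -/
noncomputable def mavScore [DecidableEq α] (V : Multiset (Finset α)) (w : Finset α) : ℕ :=
  (V.map fun v => (w \ v).card + (v \ w).card).sup

/-- MAV winning `k`-committees: the `k`-subsets of `C` of minimum MAV score. -/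
noncomputable def mavWinners [DecidableEq α] (C : Finset α) (V : Multiset (Finset α)) (k : ℕ) :
    Finset (Finset α) :=
  (C.powersetCard k).filter fun w => ∀ w' ∈ C.powersetCard k, mavScore V w ≤ mavScore V w'

namespace Stmt12

variable {β : Type u} [DecidableEq β]

/-- Candidate type: one candidate `c(e)` per edge `e`, or the distinguished candidate `p`. -/
abbrev Cand (β : Type u) := Finset β ⊕ Unit

/-- The distinguished candidate `p`. -/
def pc : Cand β := Sum.inr ()

/-- The candidate set `C = {p} ∪ {c(e) : e ∈ A}`. -/
def Ctot (Aed : Finset (Finset β)) : Finset (Cand β) := insert pc (Aed.image Sum.inl)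

/-- The vote `v(u)` of a vertex `u`, approving all candidates of edges incident to `u`. -/
def vVote (Aed : Finset (Finset β)) (u : β) : Finset (Cand β) :=
  (Aed.filter fun e => u ∈ e).image Sum.inl

end Stmt12

/-! With `Δω > 0`, a candidate not yet elected adds to the score exactly when some vote approves
it. In the constructed election `p` is approved by nobody, and `c(e)` is approved iff `e` is
covered by `S`. So the sequential rule elects the candidates of the covered edges one per round,
and only when they are exhausted does `p`, first in the tie-breaking order, win a tie against the
remaining candidates, which all add nothing. Thus `p` stays out of the `t`-committee iff `S`
covers at least `t` edges. -/

section SequentialThiele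

variable [DecidableEq α] {ω : ℕ → ℝ} {V : Multiset (Finset α)} {w : Finset α} {c : α}

theorem marginContrib_eq_sum :
    marginContrib ω V w c
      = (V.map fun v => ω (v ∩ insert c w).card - ω (v ∩ w).card).sum := by
  simp only [marginContrib, thieleScore, Multiset.sum_map_sub]

theorem sub_card_inter_insert_nonneg (hω : Monotone ω) (v : Finset α) :
    0 ≤ ω (v ∩ insert c w).card - ω (v ∩ w).card :=
  sub_nonneg.mpr (hω (card_le_card (inter_subset_inter_left (subset_insert c w))))

theorem marginContrib_nonneg (hω : Monotone ω) : 0 ≤ marginContrib ω V w c := by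
  rw [marginContrib_eq_sum]
  refine Multiset.sum_nonneg fun x hx => ?_
  obtain ⟨v, -, rfl⟩ := Multiset.mem_map.mp hx
  exact sub_card_inter_insert_nonneg hω v

theorem marginContrib_eq_zero_of_forall_notMem (h : ∀ v ∈ V, c ∉ v) :
    marginContrib ω V w c = 0 := by
  rw [marginContrib_eq_sum]
  refine Multiset.sum_eq_zero fun x hx => ?_
  obtain ⟨v, hv, rfl⟩ := Multiset.mem_map.mp hx
  rw [inter_insert_of_notMem (h v hv), sub_self]

theorem marginContrib_pos_of_mem (hω : StrictMono ω) (hcw : c ∉ w) {v : Finset α}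
    (hv : v ∈ V) (hcv : c ∈ v) : 0 < marginContrib ω V w c := by
  have hterm : 0 < ω (v ∩ insert c w).card - ω (v ∩ w).card := by
    rw [inter_insert_of_mem hcv, card_insert_of_notMem fun h => hcw (mem_inter.mp h).2]
    exact sub_pos.mpr (hω (Nat.lt_succ_self _))
  rw [marginContrib_eq_sum]
  refine hterm.trans_le <|
    Multiset.single_le_sum (fun x hx => ?_) _ (Multiset.mem_map_of_mem _ hv)
  obtain ⟨v', -, rfl⟩ := Multiset.mem_map.mp hx
  exact sub_card_inter_insert_nonneg hω.monotone v'

theorem marginContrib_pos_iff (hω : StrictMono ω) (hcw : c ∉ w) :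
    0 < marginContrib ω V w c ↔ ∃ v ∈ V, c ∈ v := by
  refine ⟨fun h => ?_, fun ⟨v, hv, hcv⟩ => marginContrib_pos_of_mem hω hcw hv hcv⟩
  by_contra! hnone
  exact h.ne' (marginContrib_eq_zero_of_forall_notMem hnone)

variable {pri : α → ℕ} {C : Finset α}

theorem seqCommittee_mono : Monotone (seqCommittee ω pri V C) :=
  monotone_nat_of_le_succ fun _ => subset_union_left

theorem seqNext_subset_sdiff : seqNext ω pri V C w ⊆ C \ w :=
  (filter_subset _ _).trans (filter_subset _ _)

theorem seqNext_nonempty (h : (C \ w).Nonempty) : (seqNext ω pri V C w).Nonempty := by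
  obtain ⟨c, hc, hmax⟩ := exists_max_image (C \ w) (marginContrib ω V w) h
  obtain ⟨d, hd, hmin⟩ :=
    exists_min_image (maxMarginSet ω V C w) pri ⟨c, mem_filter.mpr ⟨hc, hmax⟩⟩
  exact ⟨d, mem_filter.mpr ⟨hd, hmin⟩⟩

theorem card_seqNext_le_one (hinj : Set.InjOn pri C) : (seqNext ω pri V C w).card ≤ 1 := by
  refine card_le_one.mpr fun a ha b hb => ?_
  have haC := (mem_sdiff.mp (seqNext_subset_sdiff ha)).1
  have hbC := (mem_sdiff.mp (seqNext_subset_sdiff hb)).1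
  exact hinj haC hbC <| le_antisymm ((mem_filter.mp ha).2 b (mem_filter.mp hb).1)
    ((mem_filter.mp hb).2 a (mem_filter.mp ha).1)

theorem exists_seqNext_eq_singleton (hinj : Set.InjOn pri C) (h : (C \ w).Nonempty) :
    ∃ c, seqNext ω pri V C w = {c} :=
  card_eq_one.mp <| le_antisymm (card_seqNext_le_one hinj) (seqNext_nonempty h).card_pos

/- Below, `p` is a candidate that never adds to the score and wins every tie, and `P` is the set
of candidates that add to the score whenever they are not yet elected. -/

variable {p : α} {P : Finset α}

theorem seqNext_subset_of_not_subset (hPC : P ⊆ C)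
    (hP : ∀ w c, c ∉ w → (0 < marginContrib ω V w c ↔ c ∈ P)) (hPw : ¬ P ⊆ w) :
    seqNext ω pri V C w ⊆ P := by
  intro c hc
  have hcmax := (mem_filter.mp hc).1
  have hcw := (mem_sdiff.mp (mem_filter.mp hcmax).1).2
  obtain ⟨d, hdP, hdw⟩ := not_subset.mp hPw
  have hd_le := (mem_filter.mp hcmax).2 d (mem_sdiff.mpr ⟨hPC hdP, hdw⟩)
  exact (hP w c hcw).mp (((hP w d hdw).mpr hdP).trans_le hd_le)

theorem mem_seqNext_of_subset (hpC : p ∈ C) (hpri : ∀ c ∈ C, c ≠ p → pri p < pri c)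
    (hnonneg : ∀ w c, 0 ≤ marginContrib ω V w c)
    (hP : ∀ w c, c ∉ w → (0 < marginContrib ω V w c ↔ c ∈ P))
    (hPw : P ⊆ w) (hpw : p ∉ w) : p ∈ seqNext ω pri V C w := by
  have hzero : ∀ c ∈ C \ w, marginContrib ω V w c = 0 := fun c hc =>
    have hcw := (mem_sdiff.mp hc).2
    (hnonneg w c).antisymm' (not_lt.mp fun h => hcw (hPw ((hP w c hcw).mp h)))
  have hpC' : p ∈ C \ w := mem_sdiff.mpr ⟨hpC, hpw⟩
  have hpmax : p ∈ maxMarginSet ω V C w :=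
    mem_filter.mpr ⟨hpC', fun c hc => (hzero c hc).trans (hzero p hpC').symm |>.le⟩
  refine mem_filter.mpr ⟨hpmax, fun c hc => ?_⟩
  have hcC := (mem_sdiff.mp (mem_filter.mp hc).1).1
  rcases eq_or_ne c p with rfl | hcp
  · exact le_rfl
  · exact (hpri c hcC hcp).le

theorem seqCommittee_subset_and_card_eq (hinj : Set.InjOn pri C) (hPC : P ⊆ C)
    (hP : ∀ w c, c ∉ w → (0 < marginContrib ω V w c ↔ c ∈ P)) {i : ℕ}
    (hi : i ≤ P.card) :
    seqCommittee ω pri V C i ⊆ P ∧ (seqCommittee ω pri V C i).card = i := by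
  induction i with
  | zero => exact ⟨empty_subset _, rfl⟩
  | succ i ih =>
    obtain ⟨hsub, hcard⟩ := ih (Nat.le_of_succ_le hi)
    set W := seqCommittee ω pri V C i
    have hPW : ¬ P ⊆ W := fun h => by have := card_le_card h; omega
    obtain ⟨d, hdP, hdW⟩ := not_subset.mp hPW
    obtain ⟨c, hc⟩ := exists_seqNext_eq_singleton (V := V) (ω := ω) hinj
      ⟨d, mem_sdiff.mpr ⟨hPC hdP, hdW⟩⟩
    have hcP : c ∈ P := seqNext_subset_of_not_subset hPC hP hPW (hc ▸ mem_singleton_self c)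
    have hcW : c ∉ W := (mem_sdiff.mp (seqNext_subset_sdiff (hc ▸ mem_singleton_self c))).2
    have hstep : seqCommittee ω pri V C (i + 1) = insert c W := by
      rw [seqCommittee, hc, union_comm, ← insert_eq]
    rw [hstep]
    exact ⟨insert_subset hcP hsub, by rw [card_insert_of_notMem hcW, hcard]⟩

theorem mem_seqCommittee_of_card_lt (hinj : Set.InjOn pri C) (hPC : P ⊆ C) (hpC : p ∈ C)
    (hpri : ∀ c ∈ C, c ≠ p → pri p < pri c)
    (hnonneg : ∀ w c, 0 ≤ marginContrib ω V w c)
    (hP : ∀ w c, c ∉ w → (0 < marginContrib ω V w c ↔ c ∈ P)) (hpP : p ∉ P) {i : ℕ}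
    (hi : P.card < i) : p ∈ seqCommittee ω pri V C i := by
  obtain ⟨hsub, hcard⟩ := seqCommittee_subset_and_card_eq (ω := ω) (V := V) hinj hPC hP le_rfl
  have hfull : seqCommittee ω pri V C P.card = P := eq_of_subset_of_card_le hsub hcard.ge
  refine seqCommittee_mono (Nat.succ_le_of_lt hi) (mem_union_right _ ?_)
  rw [hfull]
  exact mem_seqNext_of_subset hpC hpri hnonneg hP subset_rfl hpP

theorem notMem_seqCommittee_iff (hinj : Set.InjOn pri C) (hPC : P ⊆ C) (hpC : p ∈ C)
    (hpri : ∀ c ∈ C, c ≠ p → pri p < pri c)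
    (hnonneg : ∀ w c, 0 ≤ marginContrib ω V w c)
    (hP : ∀ w c, c ∉ w → (0 < marginContrib ω V w c ↔ c ∈ P)) (hpP : p ∉ P) {t : ℕ} :
    p ∉ seqCommittee ω pri V C t ↔ t ≤ P.card := by
  refine ⟨fun hp => not_lt.mp fun ht => hp ?_, fun ht hp => ?_⟩
  · exact mem_seqCommittee_of_card_lt hinj hPC hpC hpri hnonneg hP hpP ht
  · exact hpP ((seqCommittee_subset_and_card_eq hinj hPC hP ht).1 hp)

end SequentialThiele

namespace Stmt12

variable {β : Type u} [DecidableEq β]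

def coveredCands (Aed : Finset (Finset β)) (S : Finset β) : Finset (Cand β) :=
  (Aed.filter fun e => (e ∩ S).Nonempty).image Sum.inl

theorem exists_mem_vVote_iff (Aed : Finset (Finset β)) (S : Finset β) (c : Cand β) :
    (∃ v ∈ S.val.map (vVote Aed), c ∈ v) ↔ c ∈ coveredCands Aed S := by
  constructor
  · rintro ⟨v, hv, hc⟩
    obtain ⟨u, hu, rfl⟩ := Multiset.mem_map.mp hv
    obtain ⟨e, he, rfl⟩ := mem_image.mp hc
    obtain ⟨heA, hue⟩ := mem_filter.mp he
    exact mem_image_of_mem _ (mem_filter.mpr ⟨heA, u, mem_inter.mpr ⟨hue, hu⟩⟩)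
  · intro hc
    obtain ⟨e, he, rfl⟩ := mem_image.mp hc
    obtain ⟨heA, u, hu⟩ := mem_filter.mp he
    exact ⟨vVote Aed u, Multiset.mem_map_of_mem _ (mem_inter.mp hu).2,
      mem_image_of_mem _ (mem_filter.mpr ⟨heA, (mem_inter.mp hu).1⟩)⟩

theorem card_coveredCands (Aed : Finset (Finset β)) (S : Finset β) :
    (coveredCands Aed S).card = (Aed.filter fun e => (e ∩ S).Nonempty).card :=
  card_image_of_injective _ Sum.inl_injective

theorem coveredCands_subset_Ctot (Aed : Finset (Finset β)) (S : Finset β) :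
    coveredCands Aed S ⊆ Ctot Aed :=
  (image_subset_image (filter_subset _ _)).trans (subset_insert _ _)

theorem pc_notMem_coveredCands (Aed : Finset (Finset β)) (S : Finset β) :
    pc ∉ coveredCands Aed S := by
  simp [coveredCands, pc]

theorem pc_notMem_seqCommittee_iff {ω : ℕ → ℝ} (hω : StrictMono ω)
    {Aed : Finset (Finset β)} {pri : Cand β → ℕ}
    (hinj : Set.InjOn pri (Ctot Aed : Set (Cand β)))
    (hpri : ∀ c ∈ Ctot Aed, c ≠ pc → pri pc < pri c) (S : Finset β) (t : ℕ) :
    pc ∉ seqCommittee ω pri (S.val.map (vVote Aed)) (Ctot Aed) t ↔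
      t ≤ (Aed.filter fun e => (e ∩ S).Nonempty).card := by
  rw [← card_coveredCands]
  refine notMem_seqCommittee_iff hinj (coveredCands_subset_Ctot Aed S) (mem_insert_self _ _)
    hpri (fun _ _ => marginContrib_nonneg hω.monotone) (fun _ c hcw => ?_)
    (pc_notMem_coveredCands Aed S)
  rw [marginContrib_pos_iff hω hcw, exists_mem_vVote_iff]

theorem dcav_seq_thiele_general (ω : ℕ → ℝ)
    (hΔ : ∀ i : ℕ, 0 < ω (i + 1) - ω i)
    (N : Finset β) (Aed : Finset (Finset β))
    (κ t : ℕ)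
    (pri : Cand β → ℕ) (hinj : Set.InjOn pri (Ctot Aed : Set (Cand β)))
    (hpri : ∀ c ∈ Ctot Aed, c ≠ pc → pri pc < pri c) :
    (∃ S ⊆ N, S.card ≤ κ ∧ t ≤ (Aed.filter fun e => (e ∩ S).Nonempty).card) ↔
      (∃ S ⊆ N, S.card ≤ κ ∧
        pc ∉ seqCommittee ω pri (S.val.map (vVote Aed)) (Ctot Aed) t) := by
  have hω : StrictMono ω := strictMono_nat_of_lt_succ fun i => sub_pos.mp (hΔ i)
  exact exists_congr fun S => and_congr_right fun _ => and_congr_right fun _ =>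
    (pc_notMem_seqCommittee_iff hω hinj hpri S t).symm

/-- correctness of the reduction from Maximum Partial Vertex Cover to
destructive control by adding voters for sequential ω-Thiele rules with `Δω(i) > 0`
for all `i ≥ 0`. -/
theorem dcav_seq_thiele (ω : ℕ → ℝ) (hω0 : ω 0 = 0) (hmono : ∀ i, ω i ≤ ω (i + 1))
    (hΔ : ∀ i : ℕ, 0 < ω (i + 1) - ω i)
    (N : Finset β) (Aed : Finset (Finset β))
    (hedge : ∀ e ∈ Aed, e.card = 2 ∧ e ⊆ N)
    (κ t : ℕ) (ht1 : 1 ≤ t) (ht2 : t ≤ Aed.card)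
    (pri : Cand β → ℕ) (hinj : Set.InjOn pri (Ctot Aed : Set (Cand β)))
    (hpri : ∀ c ∈ Ctot Aed, c ≠ pc → pri pc < pri c) :
    (∃ S ⊆ N, S.card ≤ κ ∧ t ≤ (Aed.filter fun e => (e ∩ S).Nonempty).card) ↔
      (∃ S ⊆ N, S.card ≤ κ ∧
        pc ∉ seqCommittee ω pri (S.val.map (vVote Aed)) (Ctot Aed) t) :=
  dcav_seq_thiele_general ω hΔ N Aed κ t pri hinj hpri

end Stmt12
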